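/- Let f : ℝ → ℝ be Lipschitz continuous with constant L on an interval I, and define F(a,b) := sgn(a − b)(f(a) − f(b)) with sgn(0) = 0. Then F is Lipschitz continuous in each variable with the same constant L: |F(a,b) − F(a',b)| ≤ L|a − a'| and |F(a,b) − F(a,b')| ≤ L|b − b'| for all a, a', b, b' ∈ I. -/
import Mathlib


open Set

private lemma kruzkov_key (f : ℝ → ℝ) (x b : ℝ) :
    Real.sign (x - b) * (f x - f b) = f (max x b) - f (min x b) := by
  rcases lt_trichotomy x b with h | h | h
  · rw [Real.sign_of_neg (by linarith), max_eq_right h.le, min_eq_left h.le]; ring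
  · subst h; simp
  · rw [Real.sign_of_pos (by linarith), max_eq_left h.le, min_eq_right h.le]; ring

private lemma kruzkov_aux (f : ℝ → ℝ) (L a a' b : ℝ)
    (h1 : |f a - f b| ≤ L * |a - b|) (h2 : |f a' - f b| ≤ L * |a' - b|)
    (h3 : |f a - f a'| ≤ L * |a - a'|) :
    |Real.sign (a - b) * (f a - f b) - Real.sign (a' - b) * (f a' - f b)|
      ≤ L * |a - a'| := by
  rw [kruzkov_key, kruzkov_key]
  -- WLOG a' ≤ a handled by symmetric case analysis
  rcases le_total b a with hba | hab
  · rcases le_total b a' with hba' | ha'b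
    · -- b ≤ a', b ≤ a
      rw [max_eq_left hba, min_eq_right hba, max_eq_left hba', min_eq_right hba']
      simpa using h3
    · -- a' ≤ b ≤ a
      rw [max_eq_left hba, min_eq_right hba, max_eq_right ha'b, min_eq_left ha'b]
      have hA : |f a - f b| ≤ L * (a - b) := by
        rwa [abs_of_nonneg (by linarith : (0:ℝ) ≤ a - b)] at h1
      have hB : |f a' - f b| ≤ L * (b - a') := by
        rwa [abs_of_nonpos (by linarith : a' - b ≤ 0), neg_sub] at h2
      have : |f a - f b - (f b - f a')| ≤ |f a - f b| + |f a' - f b| := by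
        calc |f a - f b - (f b - f a')| = |(f a - f b) + (f a' - f b)| := by ring_nf
          _ ≤ |f a - f b| + |f a' - f b| := abs_add_le _ _
      rw [abs_of_nonneg (by linarith : (0:ℝ) ≤ a - a')]
      linarith
  · rcases le_total a' b with ha'b | hba'
    · -- a ≤ b, a' ≤ b
      rw [max_eq_right hab, min_eq_left hab, max_eq_right ha'b, min_eq_left ha'b]
      have : |f b - f a - (f b - f a')| = |f a - f a'| := by
        rw [abs_sub_comm]; ring_nf
      rw [this]; exact h3
    · -- a ≤ b ≤ a'
      rw [max_eq_right hab, min_eq_left hab, max_eq_left hba', min_eq_right hba']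
      have hA : |f a - f b| ≤ L * (b - a) := by
        rwa [abs_of_nonpos (by linarith : a - b ≤ 0), neg_sub] at h1
      have hB : |f a' - f b| ≤ L * (a' - b) := by
        rwa [abs_of_nonneg (by linarith : (0:ℝ) ≤ a' - b)] at h2
      have : |f b - f a - (f a' - f b)| ≤ |f a - f b| + |f a' - f b| := by
        calc |f b - f a - (f a' - f b)| = |-((f a - f b) + (f a' - f b))| := by ring_nf
          _ = |(f a - f b) + (f a' - f b)| := abs_neg _
          _ ≤ _ := abs_add_le _ _
      rw [abs_of_nonpos (by linarith : a - a' ≤ 0), neg_sub]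
      linarith

/-- **Lipschitz continuity of the Kružkov entropy flux**
`F(a,b) = sgn(a − b)(f(a) − f(b))` in each of its variables. -/
theorem kruzkov_flux_lipschitz
    (f : ℝ → ℝ) (I : Set ℝ) (hI : I.OrdConnected) (L : ℝ)
    (hf : ∀ a ∈ I, ∀ b ∈ I, |f a - f b| ≤ L * |a - b|) :
    ∀ a ∈ I, ∀ a' ∈ I, ∀ b ∈ I, ∀ b' ∈ I,
      |Real.sign (a - b) * (f a - f b) - Real.sign (a' - b) * (f a' - f b)|
          ≤ L * |a - a'|
      ∧ |Real.sign (a - b) * (f a - f b) - Real.sign (a - b') * (f a - f b')|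
          ≤ L * |b - b'| := by
  intro a ha a' ha' b hb b' hb'
  constructor
  · exact kruzkov_aux f L a a' b (hf a ha b hb) (hf a' ha' b hb) (hf a ha a' ha')
  · have hswap : ∀ x y : ℝ, Real.sign (x - y) * (f x - f y)
        = Real.sign (y - x) * (f y - f x) := by
      intro x y
      have : (x - y) = -(y - x) := by ring
      rw [this, Real.sign_neg]; ring
    rw [hswap a b, hswap a b']
    exact kruzkov_aux f L b b' a (hf b hb a ha) (hf b' hb' a ha) (hf b hb b' hb')
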